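/- arXiv:2005.02438 — 8 statements merged into one kernel-verified Lean document; each statement's English description precedes it below -/
import Mathlib

section
/- Under the action h·r of GL₂(ℂ) on ℂ⁴, every r ∈ ℂ⁴ lies in the orbit of exactly one of the four points c₀ = (0,0,0,0), c₁ = (1,0,0,0), c₂ = (0,1,0,0), c₃ = (1,0,1,0); that is, the action has exactly four orbits, with these representatives. (Here f_{c₁} = y³, f_{c₂} = −3y²x, and f_{c₃} = y³ − 3x²y.) -/
noncomputable section

open Matrix

/-- The binary cubic form `f_r(x,y) = r₀y³ − 3r₁y²x − 3r₂yx² − r₃x³` attached to `r ∈ ℂ⁴`. -/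
def fcub (r : Fin 4 → ℂ) (x y : ℂ) : ℂ :=
  r 0 * y ^ 3 - 3 * r 1 * y ^ 2 * x - 3 * r 2 * y * x ^ 2 - r 3 * x ^ 3

/-- The 4×4 matrix `M(h)` for `h = [[a,b],[c,d]]`. -/
def Mmat (a b c d : ℂ) : Matrix (Fin 4) (Fin 4) ℂ :=
  !![d ^ 3, -3 * c * d ^ 2, -3 * c ^ 2 * d, -c ^ 3;
     -b * d ^ 2, d * (a * d + 2 * b * c), c * (2 * a * d + b * c), a * c ^ 2;
     -b ^ 2 * d, b * (2 * a * d + b * c), a * (a * d + 2 * b * c), a ^ 2 * c;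
     -b ^ 3, 3 * a * b ^ 2, 3 * a ^ 2 * b, a ^ 3]

/-- The action `h·r := (ad−bc)⁻¹ · M(h) · r` of `GL₂(ℂ)` on `ℂ⁴`. -/
def act (a b c d : ℂ) (r : Fin 4 → ℂ) : Fin 4 → ℂ :=
  (a * d - b * c)⁻¹ • (Mmat a b c d).mulVec r

/-- Matrix form of `Mmat`. -/
def MmatM (h : Matrix (Fin 2) (Fin 2) ℂ) : Matrix (Fin 4) (Fin 4) ℂ :=
  Mmat (h 0 0) (h 0 1) (h 1 0) (h 1 1)

/-- Matrix form of the action. -/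
def actM (h : Matrix (Fin 2) (Fin 2) ℂ) (r : Fin 4 → ℂ) : Fin 4 → ℂ :=
  act (h 0 0) (h 0 1) (h 1 0) (h 1 1) r

/-- Matrix of the dual action: the coefficients of
`(ad−bc)² · f_{h·*s}(x,y) = f_s(dx−by, ay−cx)`. -/
def Mdual (a b c d : ℂ) : Matrix (Fin 4) (Fin 4) ℂ :=
  !![a ^ 3, 3 * a ^ 2 * b, -3 * a * b ^ 2, b ^ 3;
     a ^ 2 * c, a ^ 2 * d + 2 * a * b * c, -(2 * a * b * d + b ^ 2 * c), b ^ 2 * d;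
     -a * c ^ 2, -(2 * a * c * d + b * c ^ 2), a * d ^ 2 + 2 * b * c * d, -b * d ^ 2;
     c ^ 3, 3 * c ^ 2 * d, -3 * c * d ^ 2, d ^ 3]

/-- The dual action `h·*s`: the unique vector satisfying
`fcub (dualAct a b c d s) x y = ((a*d−b*c)²)⁻¹ * fcub s (d*x−b*y) (a*y−c*x)`. -/
def dualAct (a b c d : ℂ) (s : Fin 4 → ℂ) : Fin 4 → ℂ :=
  ((a * d - b * c) ^ 2)⁻¹ • (Mdual a b c d).mulVec s

/-- Matrix form of the dual action. -/
def dualActM (h : Matrix (Fin 2) (Fin 2) ℂ) (s : Fin 4 → ℂ) : Fin 4 → ℂ :=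
  dualAct (h 0 0) (h 0 1) (h 1 0) (h 1 1) s

/-- The linear form `u₁y − u₂x` attached to `u = (u₁,u₂) ∈ ℂ²`. -/
def linForm (u : ℂ × ℂ) (x y : ℂ) : ℂ := u.1 * y - u.2 * x

/-- Two linear forms are independent if `u₁u₂′ − u₂u₁′ ≠ 0`. -/
def indepLF (u v : ℂ × ℂ) : Prop := u.1 * v.2 - u.2 * v.1 ≠ 0

/-- `d₀(r) = −9(r₀r₂ + r₁²)`. -/
def dd0 (r : Fin 4 → ℂ) : ℂ := -9 * (r 0 * r 2 + r 1 ^ 2)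

/-- `d₁(r) = −9(r₀r₃ + r₁r₂)`. -/
def dd1 (r : Fin 4 → ℂ) : ℂ := -9 * (r 0 * r 3 + r 1 * r 2)

/-- `d₂(r) = 9(r₁r₃ − r₂²)`. -/
def dd2 (r : Fin 4 → ℂ) : ℂ := 9 * (r 1 * r 3 - r 2 ^ 2)

/-- The quadratic form `Δ_r(x,y) = d₀(r)y² + d₁(r)xy + d₂(r)x²`. -/
def Δform (r : Fin 4 → ℂ) (x y : ℂ) : ℂ := dd0 r * y ^ 2 + dd1 r * x * y + dd2 r * x ^ 2

/-- The discriminant `D_r = d₁(r)² − 4d₀(r)d₂(r)`. -/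
def Ddisc (r : Fin 4 → ℂ) : ℂ := dd1 r ^ 2 - 4 * dd0 r * dd2 r

/-- The pairing `⟨r,s⟩ = r₀s₀ + 3r₁s₁ + 3r₂s₂ + r₃s₃`. -/
def pairK (r s : Fin 4 → ℂ) : ℂ := r 0 * s 0 + 3 * r 1 * s 1 + 3 * r 2 * s 2 + r 3 * s 3

/-- The Hessian matrix of `f_r` evaluated at `(x,y)`. -/
def HessM (r : Fin 4 → ℂ) (x y : ℂ) : Matrix (Fin 2) (Fin 2) ℂ :=
  !![6 * r 0 * y - 6 * r 1 * x, -6 * r 1 * y - 6 * r 2 * x;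
     -6 * r 1 * y - 6 * r 2 * x, -6 * r 2 * y - 6 * r 3 * x]

/-- The moment map `[r,s]`. -/
def momentMap (r s : Fin 4 → ℂ) : Matrix (Fin 2) (Fin 2) ℂ :=
  !![r 0 * s 0 + 2 * r 1 * s 1 + r 2 * s 2, -(r 1 * s 0) + 2 * r 2 * s 1 + r 3 * s 2;
     -(r 0 * s 1) + 2 * r 1 * s 2 + r 2 * s 3, r 1 * s 1 + 2 * r 2 * s 2 + r 3 * s 3]

/-- The four orbit representatives `c₀ = 0`, `c₁ = (1,0,0,0)`, `c₂ = (0,1,0,0)`,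
`c₃ = (1,0,1,0)`. -/
def cRep : Fin 4 → (Fin 4 → ℂ) :=
  ![![0, 0, 0, 0], ![1, 0, 0, 0], ![0, 1, 0, 0], ![1, 0, 1, 0]]

/-!
The action is the substitution action on binary cubics twisted by the determinant:
`f_{h·r}(x, y) = (ad - bc)⁻¹ f_r(ax + cy, bx + dy)`. Hence orbits follow the root pattern of
`f_r`. Moving a non-root of `f_r` to `(0, 1)` makes `r₀ ≠ 0`, so `f_r = r₀ ∏ (y - lᵢx)`; a Möbius
substitution then sends the roots to those of `c₁` (triple), `c₂` (double) or `c₃` (simple).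
Conversely `r = 0`, the vanishing of the Hessian coefficients `d₀, d₁, d₂` (which transform as a
binary quadratic form) and the vanishing of `D_r` (which gets multiplied by `det²`) are orbit
invariants separating the four representatives.
-/

lemma mulVec_Mmat (a b c d : ℂ) (r : Fin 4 → ℂ) :
    Mmat a b c d *ᵥ r = ![
      d ^ 3 * r 0 - 3 * c * d ^ 2 * r 1 - 3 * c ^ 2 * d * r 2 - c ^ 3 * r 3,
      -(b * d ^ 2) * r 0 + d * (a * d + 2 * b * c) * r 1 + c * (2 * a * d + b * c) * r 2
        + a * c ^ 2 * r 3,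
      -(b ^ 2 * d) * r 0 + b * (2 * a * d + b * c) * r 1 + a * (a * d + 2 * b * c) * r 2
        + a ^ 2 * c * r 3,
      -(b ^ 3) * r 0 + 3 * a * b ^ 2 * r 1 + 3 * a ^ 2 * b * r 2 + a ^ 3 * r 3] := by
  ext j
  fin_cases j <;> simp [Mmat, mulVec, dotProduct, Fin.sum_univ_four]
  all_goals ring

lemma fcub_mulVec_Mmat (a b c d x y : ℂ) (r : Fin 4 → ℂ) :
    fcub (Mmat a b c d *ᵥ r) x y = fcub r (a * x + c * y) (b * x + d * y) := by
  simp only [fcub, mulVec_Mmat, cons_val_zero, cons_val_one, cons_val]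
  ring

lemma fcub_act (a b c d x y : ℂ) (r : Fin 4 → ℂ) :
    fcub (act a b c d r) x y = (a * d - b * c)⁻¹ * fcub r (a * x + c * y) (b * x + d * y) := by
  rw [← fcub_mulVec_Mmat]
  simp only [act, fcub, Pi.smul_apply, smul_eq_mul]
  ring

lemma fcub_zero_one (r : Fin 4 → ℂ) : fcub r 0 1 = r 0 := by
  simp [fcub]

lemma act_apply_zero (a b c d : ℂ) (r : Fin 4 → ℂ) :
    act a b c d r 0 = (a * d - b * c)⁻¹ * fcub r c d := by
  rw [← fcub_zero_one (act a b c d r), fcub_act]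
  simp

lemma Mmat_mul (a b c d a' b' c' d' : ℂ) :
    Mmat a b c d * Mmat a' b' c' d' =
      Mmat (a * a' + b * c') (a * b' + b * d') (c * a' + d * c') (c * b' + d * d') := by
  ext i j
  fin_cases i <;> fin_cases j <;> simp [Mmat, mul_apply, Fin.sum_univ_four] <;> ring

lemma act_act (a b c d a' b' c' d' : ℂ) (r : Fin 4 → ℂ) :
    act a b c d (act a' b' c' d' r) =
      act (a * a' + b * c') (a * b' + b * d') (c * a' + d * c') (c * b' + d * d') r := by
  simp only [act, mulVec_smul, smul_smul, mulVec_mulVec, Mmat_mul, ← mul_inv]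
  congr 2
  ring

lemma act_scalar (k : ℂ) (r : Fin 4 → ℂ) : act k 0 0 k r = k • r := by
  by_cases hk : k = 0
  · simp [act, hk]
  ext j
  fin_cases j <;> simp [act, mulVec_Mmat] <;> field_simp

lemma act_eq_smul_of_mulVec {a b c d k : ℂ} (hdet : a * d - b * c ≠ 0) {r s : Fin 4 → ℂ}
    (h : Mmat a b c d *ᵥ r = ((a * d - b * c) * k) • s) : act a b c d r = k • s := by
  rw [act, h, smul_smul, ← mul_assoc, inv_mul_cancel₀ hdet, one_mul]

def SameOrbit (r s : Fin 4 → ℂ) : Prop :=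
  ∃ a b c d : ℂ, a * d - b * c ≠ 0 ∧ act a b c d r = s

namespace SameOrbit

variable {r s t : Fin 4 → ℂ}

lemma trans (h₁ : SameOrbit r s) (h₂ : SameOrbit s t) : SameOrbit r t := by
  obtain ⟨a', b', c', d', hdet', rfl⟩ := h₁
  obtain ⟨a, b, c, d, hdet, rfl⟩ := h₂
  refine ⟨_, _, _, _, ?_, (act_act ..).symm⟩
  have hmul : (a * a' + b * c') * (c * b' + d * d') - (a * b' + b * d') * (c * a' + d * c') =
      (a * d - b * c) * (a' * d' - b' * c') := by ring
  rw [hmul]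
  exact mul_ne_zero hdet hdet'

lemma smul_right {k : ℂ} (hk : k ≠ 0) (r : Fin 4 → ℂ) : SameOrbit r (k • r) :=
  ⟨k, 0, 0, k, by simpa using hk, act_scalar k r⟩

lemma smul_left {k : ℂ} (hk : k ≠ 0) (r : Fin 4 → ℂ) : SameOrbit (k • r) r := by
  simpa [smul_smul, hk] using smul_right (inv_ne_zero hk) (k • r)

lemma symm (h : SameOrbit r s) : SameOrbit s r := by
  obtain ⟨a, b, c, d, hdet, rfl⟩ := h
  -- the adjugate of `h` acts as the scalar `det h`
  have hadj : act d (-b) (-c) a (act a b c d r) = (a * d - b * c) • r := by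
    rw [act_act, ← act_scalar]
    congr 1 <;> ring
  have hdet' : d * a - -b * -c ≠ 0 := by rwa [show d * a - -b * -c = a * d - b * c by ring]
  exact trans ⟨d, -b, -c, a, hdet', hadj⟩ (smul_left hdet r)

lemma of_act_eq_smul {a b c d k : ℂ} (hdet : a * d - b * c ≠ 0) (hk : k ≠ 0)
    (h : act a b c d r = k • s) : SameOrbit r s :=
  trans ⟨a, b, c, d, hdet, h⟩ (smul_left hk s)

end SameOrbit

/-- The coefficient vector of `(y - l₁x)(y - l₂x)(y - l₃x)`. -/
def cubicOfRoots (l₁ l₂ l₃ : ℂ) : Fin 4 → ℂ :=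
  ![1, (l₁ + l₂ + l₃) / 3, -(l₁ * l₂ + l₁ * l₃ + l₂ * l₃) / 3, l₁ * l₂ * l₃]

lemma cubicOfRoots_swap₁₂ (l₁ l₂ l₃ : ℂ) : cubicOfRoots l₁ l₂ l₃ = cubicOfRoots l₂ l₁ l₃ := by
  rw [cubicOfRoots, cubicOfRoots]; ring_nf

lemma cubicOfRoots_swap₂₃ (l₁ l₂ l₃ : ℂ) : cubicOfRoots l₁ l₂ l₃ = cubicOfRoots l₁ l₃ l₂ := by
  rw [cubicOfRoots, cubicOfRoots]; ring_nf

open Polynomial in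
lemma exists_eq_esymm (p q s : ℂ) :
    ∃ l₁ l₂ l₃ : ℂ, l₁ + l₂ + l₃ = p ∧ l₁ * l₂ + l₁ * l₃ + l₂ * l₃ = q ∧ l₁ * l₂ * l₃ = s := by
  have hdeg : (X ^ 3 - C p * X ^ 2 + C q * X - C s : ℂ[X]).degree = 3 := by compute_degree!
  obtain ⟨z, hz⟩ := Complex.exists_root (by rw [hdeg]; norm_num)
  replace hz : z ^ 3 - p * z ^ 2 + q * z - s = 0 := by simpa using hz
  obtain ⟨w, hw⟩ := IsAlgClosed.exists_pow_nat_eq ((p - z) ^ 2 - 4 * (z ^ 2 - p * z + q))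
    two_pos
  -- the other two roots solve the quadratic `X ^ 2 - (p - z) X + (z ^ 2 - p z + q)`
  refine ⟨z, (p - z + w) / 2, (p - z - w) / 2, by ring, ?_, ?_⟩
  · linear_combination (-1 / 4 : ℂ) * hw
  · linear_combination hz + (-z / 4) * hw

lemma exists_eq_smul_cubicOfRoots {r : Fin 4 → ℂ} (hr : r 0 ≠ 0) :
    ∃ l₁ l₂ l₃ : ℂ, r = r 0 • cubicOfRoots l₁ l₂ l₃ := by
  obtain ⟨l₁, l₂, l₃, h₁, h₂, h₃⟩ := exists_eq_esymm (3 * r 1 / r 0) (-3 * r 2 / r 0) (r 3 / r 0)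
  refine ⟨l₁, l₂, l₃, ?_⟩
  ext j
  fin_cases j <;> simp [cubicOfRoots, h₁, h₂, h₃] <;> field_simp

lemma exists_fcub_ne_zero {r : Fin 4 → ℂ} (hr : r ≠ 0) : ∃ x, fcub r x 1 ≠ 0 := by
  by_contra! h
  have h₀ := h 0
  have h₁ := h 1
  have h₂ := h (-1)
  have h₃ := h 2
  simp only [fcub] at h₀ h₁ h₂ h₃
  apply hr
  ext j
  fin_cases j
  · show r 0 = 0
    linear_combination h₀
  · show r 1 = 0
    linear_combination (1 / 6 : ℂ) * h₀ - (1 / 3 : ℂ) * h₁ + (1 / 9 : ℂ) * h₂ + (1 / 18 : ℂ) * h₃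
  · show r 2 = 0
    linear_combination (1 / 3 : ℂ) * h₀ - (1 / 6 : ℂ) * h₁ - (1 / 6 : ℂ) * h₂
  · show r 3 = 0
    linear_combination (-1 / 2 : ℂ) * h₀ + (1 / 2 : ℂ) * h₁ + (1 / 6 : ℂ) * h₂ - (1 / 6 : ℂ) * h₃

lemma sameOrbit_cRep_one_cubicOfRoots (l : ℂ) : SameOrbit (cRep 1) (cubicOfRoots l l l) := by
  refine ⟨1, -l, 0, 1, by norm_num, ?_⟩
  ext j
  fin_cases j <;> simp [act, mulVec_Mmat, cRep, cubicOfRoots] <;> ring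

lemma sameOrbit_cRep_two_cubicOfRoots {l m : ℂ} (h : l ≠ m) :
    SameOrbit (cRep 2) (cubicOfRoots l l m) := by
  -- substituting `(-mx + y, -lx + y)` into `f_{c₂} = -3y²x` gives `-3(y - lx)²(y - mx)`
  have hdet : -m * 1 - -l * 1 ≠ 0 := by
    rw [show -m * 1 - -l * 1 = l - m by ring]; exact sub_ne_zero.mpr h
  refine SameOrbit.of_act_eq_smul hdet (k := 3 / (m - l)) (by simpa using sub_ne_zero.mpr h.symm) ?_
  apply act_eq_smul_of_mulVec hdet
  ext j
  fin_cases j <;> simp [mulVec_Mmat, cRep, cubicOfRoots] <;> field_simp <;> ring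

lemma sameOrbit_cRep_three_cubicOfRoots_zero_one_neg_one :
    SameOrbit (cRep 3) (cubicOfRoots 0 1 (-1)) := by
  -- `x ↦ ax` with `a² = 1/3` turns `y³ - 3x²y` into `y³ - x²y`, up to the factor `det⁻¹ = a⁻¹`
  obtain ⟨a, ha⟩ := IsAlgClosed.exists_pow_nat_eq (1 / 3 : ℂ) two_pos
  have ha₀ : a ≠ 0 := by rintro rfl; norm_num at ha
  have hdet : a * 1 - 0 * 0 ≠ 0 := by simpa using ha₀
  refine SameOrbit.of_act_eq_smul hdet (inv_ne_zero ha₀) (act_eq_smul_of_mulVec hdet ?_)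
  rw [show (a * 1 - 0 * 0) * a⁻¹ = 1 by simp [ha₀], one_smul]
  ext j
  fin_cases j <;> simp [mulVec_Mmat, cRep, cubicOfRoots]
  linear_combination ha

lemma sameOrbit_cubicOfRoots_zero_one_neg_one {l₁ l₂ l₃ : ℂ} (h₁₂ : l₁ ≠ l₂) (h₁₃ : l₁ ≠ l₃)
    (h₂₃ : l₂ ≠ l₃) : SameOrbit (cubicOfRoots 0 1 (-1)) (cubicOfRoots l₁ l₂ l₃) := by
  -- substituting `(q, p) = (ax+cy, bx+dy)` into `Y(Y-X)(Y+X)` gives `p(p-q)(p+q)`, and the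
  -- entries below make `p`, `p - q`, `p + q` multiples of `y - l₁x`, `y - l₂x`, `y - l₃x`
  set a := 2 * l₂ * l₃ - l₁ * l₃ - l₁ * l₂
  set b := -l₁ * (l₃ - l₂)
  set c := 2 * l₁ - l₂ - l₃
  set d := l₃ - l₂
  have hdet : a * d - b * c ≠ 0 := by
    rw [show a * d - b * c = 2 * (l₃ - l₂) * (l₁ - l₂) * (l₁ - l₃) by ring]
    simp [sub_eq_zero, h₁₂, h₁₃, h₂₃.symm]
  refine SameOrbit.of_act_eq_smul hdet (k := -2) (by norm_num) (act_eq_smul_of_mulVec hdet ?_)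
  ext j
  fin_cases j <;> simp [mulVec_Mmat, cubicOfRoots, a, b, c, d] <;> ring

lemma exists_sameOrbit_cRep_cubicOfRoots (l₁ l₂ l₃ : ℂ) :
    ∃ i, SameOrbit (cRep i) (cubicOfRoots l₁ l₂ l₃) := by
  rcases eq_or_ne l₁ l₂ with rfl | h₁₂
  · rcases eq_or_ne l₁ l₃ with rfl | h₁₃
    · exact ⟨1, sameOrbit_cRep_one_cubicOfRoots l₁⟩
    · exact ⟨2, sameOrbit_cRep_two_cubicOfRoots h₁₃⟩
  rcases eq_or_ne l₁ l₃ with rfl | h₁₃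
  · exact ⟨2, cubicOfRoots_swap₂₃ l₁ l₂ l₁ ▸ sameOrbit_cRep_two_cubicOfRoots h₁₂⟩
  rcases eq_or_ne l₂ l₃ with rfl | h₂₃
  · refine ⟨2, ?_⟩
    rw [cubicOfRoots_swap₁₂ l₁ l₂ l₂, cubicOfRoots_swap₂₃ l₂ l₁ l₂]
    exact sameOrbit_cRep_two_cubicOfRoots h₁₂.symm
  exact ⟨3, sameOrbit_cRep_three_cubicOfRoots_zero_one_neg_one.trans
    (sameOrbit_cubicOfRoots_zero_one_neg_one h₁₂ h₁₃ h₂₃)⟩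

lemma exists_sameOrbit_cRep (r : Fin 4 → ℂ) : ∃ i, SameOrbit (cRep i) r := by
  rcases eq_or_ne r 0 with rfl | hr
  · refine ⟨0, 1, 0, 0, 1, by norm_num, ?_⟩
    ext j
    fin_cases j <;> simp [act, mulVec_Mmat, cRep]
  obtain ⟨x, hx⟩ := exists_fcub_ne_zero hr
  set s := act 1 0 x 1 r
  have hs : s 0 ≠ 0 := by simpa [s, act_apply_zero] using hx
  obtain ⟨l₁, l₂, l₃, hls⟩ := exists_eq_smul_cubicOfRoots hs
  obtain ⟨i, hi⟩ := exists_sameOrbit_cRep_cubicOfRoots l₁ l₂ l₃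
  refine ⟨i, hi.trans ((SameOrbit.smul_right hs _).trans ?_)⟩
  rw [← hls]
  exact SameOrbit.symm ⟨1, 0, x, 1, by norm_num, rfl⟩

lemma dd_act {a b c d : ℂ} (hdet : a * d - b * c ≠ 0) (r : Fin 4 → ℂ) :
    dd0 (act a b c d r) = dd0 r * d ^ 2 + dd1 r * (c * d) + dd2 r * c ^ 2 ∧
    dd1 (act a b c d r) = 2 * dd0 r * (b * d) + dd1 r * (a * d + b * c) + 2 * dd2 r * (a * c) ∧
    dd2 (act a b c d r) = dd0 r * b ^ 2 + dd1 r * (a * b) + dd2 r * a ^ 2 := by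
  refine ⟨?_, ?_, ?_⟩ <;>
  · simp only [dd0, dd1, dd2, act, mulVec_Mmat, Pi.smul_apply, smul_eq_mul, cons_val_zero,
      cons_val_one, cons_val]
    field_simp
    ring

lemma Ddisc_act {a b c d : ℂ} (hdet : a * d - b * c ≠ 0) (r : Fin 4 → ℂ) :
    Ddisc (act a b c d r) = (a * d - b * c) ^ 2 * Ddisc r := by
  obtain ⟨h₀, h₁, h₂⟩ := dd_act hdet r
  rw [Ddisc, Ddisc, h₀, h₁, h₂]
  ring

open Classical in
/-- The orbit type read off from the invariants: `f_r = 0`, a triple root (the Hessian `Δ_r`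
vanishes), a double root (the discriminant `D_r` vanishes), three distinct roots. -/
def orbitIndex (r : Fin 4 → ℂ) : Fin 4 :=
  if r = 0 then 0
  else if dd0 r = 0 ∧ dd1 r = 0 ∧ dd2 r = 0 then 1
  else if Ddisc r = 0 then 2
  else 3

lemma SameOrbit.orbitIndex_eq {r s : Fin 4 → ℂ} (h : SameOrbit r s) :
    orbitIndex r = orbitIndex s := by
  have key : ∀ {r s}, SameOrbit r s → (r = 0 → s = 0) ∧
      (dd0 r = 0 ∧ dd1 r = 0 ∧ dd2 r = 0 → dd0 s = 0 ∧ dd1 s = 0 ∧ dd2 s = 0) ∧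
      (Ddisc r = 0 → Ddisc s = 0) := by
    rintro r _ ⟨a, b, c, d, hdet, rfl⟩
    obtain ⟨h₀, h₁, h₂⟩ := dd_act hdet r
    refine ⟨fun hr ↦ by simp [hr, act], fun ⟨e₀, e₁, e₂⟩ ↦ ?_, fun hD ↦ by simp [Ddisc_act hdet, hD]⟩
    simp [h₀, h₁, h₂, e₀, e₁, e₂]
  have hzero : r = 0 ↔ s = 0 := ⟨(key h).1, (key h.symm).1⟩
  have hhess : dd0 r = 0 ∧ dd1 r = 0 ∧ dd2 r = 0 ↔ dd0 s = 0 ∧ dd1 s = 0 ∧ dd2 s = 0 :=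
    ⟨(key h).2.1, (key h.symm).2.1⟩
  have hdisc : Ddisc r = 0 ↔ Ddisc s = 0 := ⟨(key h).2.2, (key h.symm).2.2⟩
  simp only [orbitIndex, hzero, hhess, hdisc]

lemma orbitIndex_cRep (i : Fin 4) : orbitIndex (cRep i) = i := by
  fin_cases i <;> simp [orbitIndex, cRep, dd0, dd1, dd2, Ddisc, funext_iff, Fin.forall_fin_succ]

/-- every `r ∈ ℂ⁴` lies in the orbit of exactly one of the four
representatives `c₀, c₁, c₂, c₃`. -/
theorem stmt2 (r : Fin 4 → ℂ) :
    ∃! i : Fin 4, ∃ a b c d : ℂ, a * d - b * c ≠ 0 ∧ act a b c d (cRep i) = r := by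
  obtain ⟨i, hi⟩ := exists_sameOrbit_cRep r
  refine ⟨i, hi, fun j hj ↦ ?_⟩
  change SameOrbit (cRep j) r at hj
  rw [← orbitIndex_cRep i, ← orbitIndex_cRep j, hi.orbitIndex_eq, hj.orbitIndex_eq]

end
end

section
/- For every r ∈ ℂ⁴ with f_r = u³ for some nonzero linear form u, the stabilizer {h ∈ GL₂(ℂ) : h·r = r} is conjugate in GL₂(ℂ) to the subgroup {[[d²,0],[c,d]] : c ∈ ℂ, d ∈ ℂ, d ≠ 0}. In particular, the stabilizer of c₁ = (1,0,0,0) (so f_{c₁} = y³) is exactly the set {[[d²,0],[c,d]] : c ∈ ℂ, d ≠ 0}. -/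
/-!
`M` is multiplicative and so is `det`, so `actM` is an action of the whole matrix monoid and the
stabilizer of `g·x` is `g Stab(x) g⁻¹`. If `f_r = u³` with `u = (u₁,u₂) ≠ 0`, pick `a u₁ + c u₂ = 1`:
then `g = [[a,−u₂],[c,u₁]]` has determinant `1` and `g·c₁ = r`, since comparing coefficients of `u³`
gives `r = (u₁³, u₁²u₂, −u₁u₂², u₂³)`. For the stabilizer of `c₁`, the last coordinate of
`h·c₁` is `−b³/det h`, forcing `b = 0`, and then the first one is `d³/(ad)`, forcing `a = d²`.
-/

noncomputable section

open Matrix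

namespace Matrix

variable {n K α : Type*} [Fintype n] [DecidableEq n] [Field K]

theorem stabilizer_apply_eq_image_conj (ρ : Matrix n n K → α → α) (ρ_one : ∀ x, ρ 1 x = x)
    (ρ_mul : ∀ h₁ h₂ x, ρ (h₁ * h₂) x = ρ h₁ (ρ h₂ x)) {g : Matrix n n K} (hg : g.det ≠ 0)
    (x : α) :
    {h : Matrix n n K | h.det ≠ 0 ∧ ρ h (ρ g x) = ρ g x} =
      (fun m => g * m * g⁻¹) '' {h | h.det ≠ 0 ∧ ρ h x = x} := by
  have hgu : IsUnit g.det := hg.isUnit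
  have ρ_conj (h : Matrix n n K) : ρ h (ρ g x) = ρ g (ρ (g⁻¹ * h * g) x) := by
    rw [← ρ_mul, ← ρ_mul, ← mul_assoc, ← mul_assoc, mul_nonsing_inv g hgu, one_mul]
  have ρ_inj : Function.Injective (ρ g) :=
    Function.LeftInverse.injective (g := ρ g⁻¹) fun y => by
      rw [← ρ_mul, nonsing_inv_mul g hgu, ρ_one]
  rw [Set.image_eq_preimage_of_inverse (f := fun m => g * m * g⁻¹) (g := fun m => g⁻¹ * m * g)
    (fun m => by simp only [← mul_assoc, nonsing_inv_mul_cancel_left _ _ hgu,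
      nonsing_inv_mul_cancel_right _ _ hgu])
    (fun m => by simp only [← mul_assoc, mul_nonsing_inv_cancel_left _ _ hgu,
      mul_nonsing_inv_cancel_right _ _ hgu])]
  ext h
  simp only [Set.mem_ofPred_eq, Set.mem_preimage, det_mul, ρ_conj, ρ_inj.eq_iff]
  refine and_congr_left fun _ => ?_
  simp [hg]

end Matrix

lemma MmatM_mul (h₁ h₂ : Matrix (Fin 2) (Fin 2) ℂ) : MmatM (h₁ * h₂) = MmatM h₁ * MmatM h₂ := by
  ext i j
  fin_cases i <;> fin_cases j <;>
    simp [MmatM, Mmat, mul_apply, Fin.sum_univ_two, Fin.sum_univ_four] <;> ring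

lemma actM_eq_smul_mulVec (h : Matrix (Fin 2) (Fin 2) ℂ) (r : Fin 4 → ℂ) :
    actM h r = h.det⁻¹ • MmatM h *ᵥ r := by
  simp [actM, act, MmatM, det_fin_two]

lemma actM_mul (h₁ h₂ : Matrix (Fin 2) (Fin 2) ℂ) (r : Fin 4 → ℂ) :
    actM (h₁ * h₂) r = actM h₁ (actM h₂ r) := by
  simp only [actM_eq_smul_mulVec, MmatM_mul, det_mul, mul_inv, mulVec_smul, mulVec_mulVec,
    smul_smul]

lemma actM_one (r : Fin 4 → ℂ) : actM 1 r = r := by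
  ext i
  fin_cases i <;> simp [actM, act, Mmat, dotProduct, Fin.sum_univ_four]

lemma actM_c₁ (h : Matrix (Fin 2) (Fin 2) ℂ) :
    actM h ![1, 0, 0, 0] =
      h.det⁻¹ • ![h 1 1 ^ 3, -(h 0 1 * h 1 1 ^ 2), -(h 0 1 ^ 2 * h 1 1), -h 0 1 ^ 3] := by
  ext i
  fin_cases i <;> simp [actM, act, Mmat, det_fin_two]

lemma stabilizer_c₁ :
    {h : Matrix (Fin 2) (Fin 2) ℂ | h.det ≠ 0 ∧ actM h ![1, 0, 0, 0] = ![1, 0, 0, 0]} =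
      {m | ∃ c d : ℂ, d ≠ 0 ∧ m = !![d ^ 2, 0; c, d]} := by
  ext h
  simp only [Set.mem_ofPred_eq, actM_c₁]
  constructor
  · rintro ⟨hdet, hfix⟩
    obtain ⟨a, b, c, d, rfl⟩ : ∃ a b c d, h = !![a, b; c, d] := ⟨_, _, _, _, eta_fin_two h⟩
    rw [det_fin_two_of] at hdet hfix
    have h₀ : a * d - b * c = d ^ 3 := by
      rw [← inv_mul_eq_one₀ hdet]; simpa using congrFun hfix 0
    obtain rfl : b = 0 := by simpa [hdet] using congrFun hfix 3
    have hd : d ≠ 0 := by rintro rfl; simp at hdet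
    obtain rfl : a = d ^ 2 := by
      simp only [zero_mul, sub_zero] at h₀
      exact mul_right_cancel₀ hd (by linear_combination h₀)
    exact ⟨c, d, hd, rfl⟩
  · rintro ⟨c, d, hd, rfl⟩
    have hdet : (!![d ^ 2, 0; c, d]).det = d ^ 3 := by rw [det_fin_two_of]; ring
    refine ⟨hdet ▸ pow_ne_zero 3 hd, ?_⟩
    ext i
    fin_cases i <;> simp [hdet, hd]

lemma eq_of_fcub_eq_linForm_cube {r : Fin 4 → ℂ} {u : ℂ × ℂ}
    (hf : ∀ x y : ℂ, fcub r x y = linForm u x y ^ 3) :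
    r = ![u.1 ^ 3, u.1 ^ 2 * u.2, -(u.1 * u.2 ^ 2), u.2 ^ 3] := by
  have e₁ := hf 0 1
  have e₂ := hf 1 0
  have e₃ := hf 1 1
  have e₄ := hf (-1) 1
  simp only [fcub, linForm] at e₁ e₂ e₃ e₄
  have h₀ : r 0 = u.1 ^ 3 := by linear_combination e₁
  have h₁ : r 1 = u.1 ^ 2 * u.2 := by linear_combination (e₄ - e₃ + 2 * e₂) / 6
  have h₂ : r 2 = -(u.1 * u.2 ^ 2) := by linear_combination (2 * e₁ - e₃ - e₄) / 6
  have h₃ : r 3 = u.2 ^ 3 := by linear_combination -e₂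
  ext i
  fin_cases i <;> simp [h₀, h₁, h₂, h₃]

lemma Prod.exists_mul_add_mul_eq_one {K : Type*} [Field K] {u : K × K} (hu : u ≠ 0) :
    ∃ a c : K, a * u.1 + c * u.2 = 1 := by
  by_cases h₁ : u.1 = 0
  · have h₂ : u.2 ≠ 0 := fun h₂ => hu (Prod.ext h₁ h₂)
    exact ⟨0, u.2⁻¹, by simp [h₂]⟩
  · exact ⟨u.1⁻¹, 0, by simp [h₁]⟩

lemma exists_det_eq_one_actM_c₁_eq {r : Fin 4 → ℂ} {u : ℂ × ℂ} (hu : u ≠ 0)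
    (hf : ∀ x y : ℂ, fcub r x y = linForm u x y ^ 3) :
    ∃ g : Matrix (Fin 2) (Fin 2) ℂ, g.det = 1 ∧ actM g ![1, 0, 0, 0] = r := by
  obtain ⟨a, c, hac⟩ := Prod.exists_mul_add_mul_eq_one hu
  have hdet : (!![a, -u.2; c, u.1]).det = 1 := by rw [det_fin_two_of]; linear_combination hac
  refine ⟨!![a, -u.2; c, u.1], hdet, ?_⟩
  rw [actM_c₁, hdet, eq_of_fcub_eq_linForm_cube hf]
  ext i
  fin_cases i <;> simp <;> ring

/-- if `f_r = u³` for a nonzero linear form `u`, the stabilizer of `r` is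
conjugate in `GL₂(ℂ)` to `{[[d²,0],[c,d]] : c ∈ ℂ, d ≠ 0}`; in particular the stabilizer
of `c₁ = (1,0,0,0)` is exactly this subgroup. -/
theorem stmt4 :
    (∀ r : Fin 4 → ℂ, ∀ u : ℂ × ℂ, u ≠ 0 →
      (∀ x y : ℂ, fcub r x y = (linForm u x y) ^ 3) →
      ∃ g : Matrix (Fin 2) (Fin 2) ℂ, g.det ≠ 0 ∧
        {h : Matrix (Fin 2) (Fin 2) ℂ | h.det ≠ 0 ∧ actM h r = r} =
          (fun m => g * m * g⁻¹) ''
            {m : Matrix (Fin 2) (Fin 2) ℂ | ∃ c d : ℂ, d ≠ 0 ∧ m = !![d ^ 2, 0; c, d]}) ∧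
    {h : Matrix (Fin 2) (Fin 2) ℂ | h.det ≠ 0 ∧ actM h ![1, 0, 0, 0] = ![1, 0, 0, 0]} =
      {m : Matrix (Fin 2) (Fin 2) ℂ | ∃ c d : ℂ, d ≠ 0 ∧ m = !![d ^ 2, 0; c, d]} := by
  refine ⟨fun r u hu hf => ?_, stabilizer_c₁⟩
  obtain ⟨g, hg, rfl⟩ := exists_det_eq_one_actM_c₁_eq hu hf
  have hg₀ : g.det ≠ 0 := hg ▸ one_ne_zero
  exact ⟨g, hg₀, by rw [stabilizer_apply_eq_image_conj actM actM_one actM_mul hg₀, stabilizer_c₁]⟩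

end
end

section
/- For every invertible h = [[a,b],[c,d]] ∈ GL₂(ℂ) and all r, s ∈ ℂ⁴, one has ⟨h·r, h·*s⟩ = ⟨r, s⟩; that is, the pairing ⟨,⟩ is invariant under the simultaneous action of GL₂(ℂ) on ℂ⁴ and the dual action on ℂ⁴. -/
noncomputable section

open Matrix

/-! With `W = diag(1,3,3,1)` the Gram matrix of `⟨,⟩`, the matrices of the two actions satisfy
`M(h)ᵀ W M*(h) = (ad−bc)³ W`: the dual action is the contragredient of `h ↦ M(h)` up to a power of
the determinant, and the scalars `(ad−bc)⁻¹` and `(ad−bc)⁻²` in the two actions cancel it. -/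

def pairKMatrix : Matrix (Fin 4) (Fin 4) ℂ := diagonal ![1, 3, 3, 1]

theorem pairK_eq_dotProduct_mulVec (r s : Fin 4 → ℂ) :
    pairK r s = r ⬝ᵥ (pairKMatrix *ᵥ s) := by
  simp only [pairK, pairKMatrix, mulVec_diagonal, dotProduct, Fin.sum_univ_four, cons_val]
  ring

theorem Mmat_transpose_mul_pairKMatrix_mul_Mdual (a b c d : ℂ) :
    (Mmat a b c d)ᵀ * pairKMatrix * Mdual a b c d = (a * d - b * c) ^ 3 • pairKMatrix := by
  ext i j
  fin_cases i <;> fin_cases j <;>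
    simp only [Mmat, Mdual, pairKMatrix, mul_apply, transpose_apply, diagonal_apply,
      Matrix.smul_apply, Fin.sum_univ_four, of_apply, cons_val, Fin.zero_eta, Fin.mk_one,
      Fin.reduceFinMk, Fin.isValue, Fin.reduceEq, ite_true, ite_false, smul_eq_mul] <;> ring

theorem dotProduct_mulVec_mulVec_of_transpose_mul_mul {R n : Type*} [CommSemiring R]
    [Fintype n] {M N W : Matrix n n R} {k : R} (h : Mᵀ * W * N = k • W) (r s : n → R) :
    (M *ᵥ r) ⬝ᵥ (W *ᵥ (N *ᵥ s)) = k * (r ⬝ᵥ (W *ᵥ s)) := by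
  rw [← vecMul_transpose, ← dotProduct_mulVec, mulVec_mulVec, mulVec_mulVec, h, smul_mulVec,
    dotProduct_smul, smul_eq_mul]

/-- the pairing `⟨,⟩` is invariant under the simultaneous action of
`GL₂(ℂ)` on `ℂ⁴` and the dual action on `ℂ⁴`. -/
theorem stmt10 (a b c d : ℂ) (hdet : a * d - b * c ≠ 0) (r s : Fin 4 → ℂ) :
    pairK (act a b c d r) (dualAct a b c d s) = pairK r s := by
  rw [act, dualAct, pairK_eq_dotProduct_mulVec, pairK_eq_dotProduct_mulVec, mulVec_smul,
    smul_dotProduct, dotProduct_smul, dotProduct_mulVec_mulVec_of_transpose_mul_mul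
      (Mmat_transpose_mul_pairKMatrix_mul_Mdual a b c d), smul_eq_mul, smul_eq_mul]
  field_simp

end
end

section
/- Let r, s ∈ ℂ⁴ and suppose f_r = u·u′·u″ is a product of three pairwise independent linear forms. Then the moment-map matrix [r,s] is the zero 2×2 matrix if and only if s = 0. -/
/-! For fixed `r`, the map `s ↦ [r,s]` is linear, given by a 4×4 matrix whose determinant is
`D_r / 81`. The discriminant of `f_r = u u' u''` is `-3` times the square of the product of the
pairwise determinants of `u, u', u''`, so pairwise independence makes that matrix invertible. -/

noncomputable section

open Matrix

/-- Row `2i + j` holds the coefficients of the linear form `s ↦ [r,s]ᵢⱼ`. -/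
def momentMatrix (r : Fin 4 → ℂ) : Matrix (Fin 4) (Fin 4) ℂ :=
  !![r 0, 2 * r 1, r 2, 0;
     -r 1, 2 * r 2, r 3, 0;
     0, -r 0, 2 * r 1, r 2;
     0, r 1, 2 * r 2, r 3]

theorem momentMap_eq_zero_iff_momentMatrix_mulVec (r s : Fin 4 → ℂ) :
    momentMap r s = 0 ↔ momentMatrix r *ᵥ s = 0 := by
  simp only [← Matrix.ext_iff, funext_iff, Fin.forall_fin_succ, IsEmpty.forall_iff]
  simp [momentMap, momentMatrix, Matrix.mulVec, dotProduct, Fin.sum_univ_four, and_assoc]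

theorem det_momentMatrix (r : Fin 4 → ℂ) : 81 * (momentMatrix r).det = Ddisc r := by
  rw [Matrix.det_succ_row_zero, Fin.sum_univ_four]
  simp only [det_fin_three, submatrix_apply, momentMatrix, Ddisc, dd0, dd1, dd2, of_apply, cons_val',
    Fin.succAbove, Fin.isValue, Fin.reduceCastSucc, Fin.reduceSucc, Fin.reduceLT, ↓reduceIte, cons_val,
    cons_val_fin_one, Fin.val_zero, Fin.val_one, Fin.val_two]
  ring

theorem coeffs_eq_of_fcub_eq_mul {r : Fin 4 → ℂ} {u u' u'' : ℂ × ℂ}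
    (hr : ∀ x y : ℂ, fcub r x y = linForm u x y * linForm u' x y * linForm u'' x y) :
    r 0 = u.1 * u'.1 * u''.1 ∧
    r 1 = (u.1 * u'.1 * u''.2 + u.1 * u'.2 * u''.1 + u.2 * u'.1 * u''.1) / 3 ∧
    r 2 = -(u.1 * u'.2 * u''.2 + u.2 * u'.1 * u''.2 + u.2 * u'.2 * u''.1) / 3 ∧
    r 3 = u.2 * u'.2 * u''.2 := by
  simp only [fcub, linForm] at hr
  refine ⟨?_, ?_, ?_, ?_⟩
  · linear_combination hr 0 1
  · linear_combination (1 / 6 : ℂ) * hr (-1) 1 - (1 / 6 : ℂ) * hr 1 1 + (1 / 3 : ℂ) * hr 1 0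
  · linear_combination (1 / 3 : ℂ) * hr 0 1 - (1 / 6 : ℂ) * hr 1 1 - (1 / 6 : ℂ) * hr (-1) 1
  · linear_combination -hr 1 0

theorem Ddisc_of_fcub_eq_mul {r : Fin 4 → ℂ} {u u' u'' : ℂ × ℂ}
    (hr : ∀ x y : ℂ, fcub r x y = linForm u x y * linForm u' x y * linForm u'' x y) :
    Ddisc r = -3 * ((u.1 * u'.2 - u.2 * u'.1) * (u.1 * u''.2 - u.2 * u''.1) *
      (u'.1 * u''.2 - u'.2 * u''.1)) ^ 2 := by
  obtain ⟨h0, h1, h2, h3⟩ := coeffs_eq_of_fcub_eq_mul hr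
  simp only [Ddisc, dd0, dd1, dd2, h0, h1, h2, h3]
  ring

/-- if `f_r` is a product of three pairwise independent linear forms, then
`[r,s] = 0` iff `s = 0`. -/
theorem stmt12 (r s : Fin 4 → ℂ) (u u' u'' : ℂ × ℂ)
    (h1 : indepLF u u') (h2 : indepLF u u'') (h3 : indepLF u' u'')
    (hr : ∀ x y : ℂ, fcub r x y = linForm u x y * linForm u' x y * linForm u'' x y) :
    momentMap r s = 0 ↔ s = 0 := by
  have hD : Ddisc r ≠ 0 := by
    rw [Ddisc_of_fcub_eq_mul hr]
    exact mul_ne_zero (by norm_num) (pow_ne_zero 2 (mul_ne_zero (mul_ne_zero h1 h2) h3))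
  have hdet : (momentMatrix r).det ≠ 0 := fun h => hD (by rw [← det_momentMatrix, h, mul_zero])
  rw [momentMap_eq_zero_iff_momentMatrix_mulVec]
  exact ⟨Matrix.eq_zero_of_mulVec_eq_zero hdet, fun hs => by rw [hs, Matrix.mulVec_zero]⟩

end
end

section
/- Let r, s ∈ ℂ⁴ and suppose f_r = u²·u′ where u = u₁y−u₂x and u′ are independent linear forms. Then the moment-map matrix [r,s] = 0 if and only if there exists c ∈ ℂ with f_s(x,y) = c·(u₂y+u₁x)³ for all x, y ∈ ℂ. (Here u₂y+u₁x is the linear form with coefficient vector (v₁,v₂) = (u₂,−u₁), the unique line up to scalar perpendicular to u in the sense that u₁v₁+u₂v₂ = 0.) -/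
noncomputable section

open Matrix

/-!
Write `u = (a, b)`. The coefficient vector of `u²u′` is explicit, and for it the moment map factors
as `[r, s] = D · N` (`momentMap_sqMulCoeffs`), where the entries of `D = perpCubeDefect u s` are the
linear forms `a s₀ + b s₁`, `a s₁ − b s₂`, `a s₂ − b s₃` and `det N = (2/9)(a b′ − b a′)²`. Independence of `u, u′` makes `N`
invertible, so `[r, s] = 0` iff these three forms vanish, and since `u ≠ 0` that happens iff `s` is
proportional to the coefficient vector of `(b y + a x)³`.
-/

theorem fcub_injective : Function.Injective fcub := by
  intro r t h
  have e₁ := congrFun₂ h 0 1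
  have e₂ := congrFun₂ h 1 0
  have e₃ := congrFun₂ h 1 1
  have e₄ := congrFun₂ h (-1) 1
  simp only [fcub] at e₁ e₂ e₃ e₄
  ext i
  fin_cases i
  · show r 0 = t 0
    linear_combination e₁
  · show r 1 = t 1
    linear_combination (e₄ - e₃ + 2 * e₂) / 6
  · show r 2 = t 2
    linear_combination (2 * e₁ - e₃ - e₄) / 6
  · show r 3 = t 3
    linear_combination -e₂

theorem fcub_smul (c : ℂ) (t : Fin 4 → ℂ) (x y : ℂ) : fcub (c • t) x y = c * fcub t x y := by
  simp only [fcub, Pi.smul_apply, smul_eq_mul]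
  ring

section

variable (u u' : ℂ × ℂ) (s : Fin 4 → ℂ)

def sqMulCoeffs : Fin 4 → ℂ :=
  ![u.1 ^ 2 * u'.1, (u.1 ^ 2 * u'.2 + 2 * u.1 * u.2 * u'.1) / 3,
    -(u.2 ^ 2 * u'.1 + 2 * u.1 * u.2 * u'.2) / 3, u.2 ^ 2 * u'.2]

theorem fcub_sqMulCoeffs (x y : ℂ) :
    fcub (sqMulCoeffs u u') x y = linForm u x y ^ 2 * linForm u' x y := by
  simp only [fcub, sqMulCoeffs, linForm, cons_val_zero, cons_val_one, cons_val]
  ring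

def perpCubeCoeffs : Fin 4 → ℂ := ![u.2 ^ 3, -(u.1 * u.2 ^ 2), -(u.1 ^ 2 * u.2), -u.1 ^ 3]

theorem fcub_perpCubeCoeffs (x y : ℂ) :
    fcub (perpCubeCoeffs u) x y = (u.2 * y + u.1 * x) ^ 3 := by
  simp only [fcub, perpCubeCoeffs, cons_val_zero, cons_val_one, cons_val]
  ring

theorem eq_smul_perpCubeCoeffs_iff (c : ℂ) :
    s = c • perpCubeCoeffs u ↔ ∀ x y : ℂ, fcub s x y = c * (u.2 * y + u.1 * x) ^ 3 := by
  simp only [← fcub_injective.eq_iff, funext_iff, fcub_smul, fcub_perpCubeCoeffs]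

def perpCubeDefect : Matrix (Fin 2) (Fin 2) ℂ :=
  !![u.1 * s 0 + u.2 * s 1, u.1 * s 1 - u.2 * s 2;
     -(u.1 * s 1 - u.2 * s 2), u.1 * s 2 - u.2 * s 3]

def sqMulFactor : Matrix (Fin 2) (Fin 2) ℂ :=
  !![u.1 * u'.1, -(u.1 * u'.2 + 2 * u.2 * u'.1) / 3;
     (u.2 * u'.1 + 2 * u.1 * u'.2) / 3, -(u.2 * u'.2)]

theorem momentMap_sqMulCoeffs :
    momentMap (sqMulCoeffs u u') s = perpCubeDefect u s * sqMulFactor u u' := by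
  ext i j
  fin_cases i <;> fin_cases j <;>
    simp [momentMap, sqMulCoeffs, perpCubeDefect, sqMulFactor, mul_apply] <;> ring

theorem det_sqMulFactor :
    (sqMulFactor u u').det = 2 / 9 * (u.1 * u'.2 - u.2 * u'.1) ^ 2 := by
  rw [sqMulFactor, det_fin_two_of]
  ring

theorem perpCubeDefect_eq_zero_iff (hu : u ≠ 0) :
    perpCubeDefect u s = 0 ↔ ∃ c : ℂ, s = c • perpCubeCoeffs u := by
  obtain ⟨a, b⟩ := u
  constructor
  · intro hD
    have e₀ : a * s 0 + b * s 1 = 0 := by simpa [perpCubeDefect] using congrFun₂ hD 0 0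
    have e₁ : a * s 1 - b * s 2 = 0 := by simpa [perpCubeDefect] using congrFun₂ hD 0 1
    have e₂ : a * s 2 - b * s 3 = 0 := by simpa [perpCubeDefect] using congrFun₂ hD 1 1
    by_cases hb : b = 0
    · subst hb
      have ha : a ≠ 0 := fun ha => hu (by simp [ha])
      have hs₀ : s 0 = 0 := by simpa [ha] using e₀
      have hs₁ : s 1 = 0 := by simpa [ha] using e₁
      have hs₂ : s 2 = 0 := by simpa [ha] using e₂
      refine ⟨-s 3 / a ^ 3, funext fun i => ?_⟩
      fin_cases i <;> simp [perpCubeCoeffs, ha, hs₀, hs₁, hs₂]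
    · refine ⟨s 0 / b ^ 3, funext fun i => ?_⟩
      fin_cases i <;>
        simp only [Fin.zero_eta, Fin.mk_one, Fin.reduceFinMk, Fin.isValue, perpCubeCoeffs,
          Pi.smul_apply, cons_val_zero, cons_val_one, cons_val, smul_eq_mul, mul_neg] <;>
        field_simp
      · linear_combination e₀
      · linear_combination a * e₀ - b * e₁
      · linear_combination a ^ 2 * e₀ - a * b * e₁ - b ^ 2 * e₂
  · rintro ⟨c, rfl⟩
    ext i j
    fin_cases i <;> fin_cases j <;> simp [perpCubeDefect, perpCubeCoeffs] <;> ring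

end

/-- if `f_r = u²·u′` with `u, u′` independent then `[r,s] = 0` iff
`f_s = c·(u₂y+u₁x)³` for some `c`. -/
theorem stmt13 (r s : Fin 4 → ℂ) (u u' : ℂ × ℂ) (h : indepLF u u')
    (hr : ∀ x y : ℂ, fcub r x y = (linForm u x y) ^ 2 * linForm u' x y) :
    momentMap r s = 0 ↔
      ∃ c : ℂ, ∀ x y : ℂ, fcub s x y = c * (u.2 * y + u.1 * x) ^ 3 := by
  obtain rfl : r = sqMulCoeffs u u' :=
    fcub_injective (funext₂ fun x y => (hr x y).trans (fcub_sqMulCoeffs u u' x y).symm)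
  have hu : u ≠ 0 := by
    rintro rfl
    exact h (by simp)
  have hN : IsUnit (sqMulFactor u u') := by
    rw [Matrix.isUnit_iff_isUnit_det, det_sqMulFactor]
    exact (mul_ne_zero (by norm_num) (pow_ne_zero 2 h)).isUnit
  rw [momentMap_sqMulCoeffs, hN.mul_left_eq_zero, perpCubeDefect_eq_zero_iff u s hu]
  exact exists_congr (eq_smul_perpCubeCoeffs_iff u s)

end
end

section
/- The simultaneous stabilizer {h ∈ GL₂(ℂ) : h·(0,1,0,0) = (0,1,0,0) and h·*(0,0,0,−1) = (0,0,0,−1)} is exactly the two-element subgroup {[[1,0],[0,1]], [[−1,0],[0,1]]}; in particular the equivariant microlocal fundamental group A^mic of the orbit of cubics with exactly one repeated linear factor has order 2. -/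
noncomputable section

open Matrix

/-!
Clearing the scalar factors `(ad − bc)⁻¹` and `(ad − bc)⁻²` turns both fixed-point conditions into
polynomial equations. The first coordinate of the dual condition gives `b³ = 0`; then `ad − bc = ad`,
the action condition forces `c = 0` and `d = 1`, and the last dual coordinate reads `a² = d³ = 1`.
-/

lemma act_e1 (a b c d : ℂ) :
    act a b c d ![0, 1, 0, 0] =
      (a * d - b * c)⁻¹ • ![-3 * c * d ^ 2, d * (a * d + 2 * b * c), b * (2 * a * d + b * c),
        3 * a * b ^ 2] := by
  ext i; fin_cases i <;> simp [act, Mmat]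

lemma dualAct_neg_e3 (a b c d : ℂ) :
    dualAct a b c d ![0, 0, 0, -1] =
      ((a * d - b * c) ^ 2)⁻¹ • ![-b ^ 3, -(b ^ 2 * d), b * d ^ 2, -d ^ 3] := by
  ext i; fin_cases i <;> simp [dualAct, Mdual]

lemma act_e1_and_dualAct_neg_e3_fixed_iff (a b c d : ℂ) :
    (a * d - b * c ≠ 0 ∧ act a b c d ![0, 1, 0, 0] = ![0, 1, 0, 0] ∧
        dualAct a b c d ![0, 0, 0, -1] = ![0, 0, 0, -1]) ↔
      b = 0 ∧ c = 0 ∧ d = 1 ∧ (a = 1 ∨ a = -1) := by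
  constructor
  · rintro ⟨hdet, hact, hdual⟩
    rw [act_e1, inv_smul_eq_iff₀ hdet] at hact
    rw [dualAct_neg_e3, inv_smul_eq_iff₀ (pow_ne_zero 2 hdet)] at hdual
    simp only [smul_cons, smul_empty, vecCons_inj, smul_eq_mul, mul_zero, mul_one, mul_neg_one,
      and_true] at hact hdual
    obtain ⟨hc, hd, -, -⟩ := hact
    obtain ⟨hb, -, -, ha⟩ := hdual
    have hb : b = 0 := by simpa using hb
    subst hb
    simp only [zero_mul, sub_zero, mul_zero, add_zero] at hdet hd ha
    have hd : d = 1 := mul_left_cancel₀ hdet (by linear_combination hd)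
    subst hd
    refine ⟨rfl, ?_, rfl, ?_⟩
    · simpa using hc
    · exact sq_eq_one_iff.mp (by linear_combination ha)
  · rintro ⟨rfl, rfl, rfl, rfl | rfl⟩ <;> norm_num [act_e1, dualAct_neg_e3]

lemma stabilizer_e1_dual_neg_e3_eq :
    {h : Matrix (Fin 2) (Fin 2) ℂ | h.det ≠ 0 ∧ actM h ![0, 1, 0, 0] = ![0, 1, 0, 0] ∧
        dualActM h ![0, 0, 0, -1] = ![0, 0, 0, -1]} =
      {(!![1, 0; 0, 1] : Matrix (Fin 2) (Fin 2) ℂ), !![-1, 0; 0, 1]} := by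
  ext h
  rw [Set.mem_ofPred_eq, det_fin_two, actM, dualActM,
    act_e1_and_dualAct_neg_e3_fixed_iff, Set.mem_insert_iff, Set.mem_singleton_iff]
  simp only [← Matrix.ext_iff, Fin.forall_fin_two, of_apply, cons_val', cons_val_zero, cons_val_one,
    empty_val', cons_val_fin_one]
  tauto

/-- the simultaneous stabilizer of `(0,1,0,0)` and the dual vector
`(0,0,0,−1)` is exactly `{[[1,0],[0,1]], [[−1,0],[0,1]]}`; in particular it has order 2. -/
theorem stmt16 :
    {h : Matrix (Fin 2) (Fin 2) ℂ | h.det ≠ 0 ∧ actM h ![0, 1, 0, 0] = ![0, 1, 0, 0] ∧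
        dualActM h ![0, 0, 0, -1] = ![0, 0, 0, -1]} =
      {(!![1, 0; 0, 1] : Matrix (Fin 2) (Fin 2) ℂ), !![-1, 0; 0, 1]} ∧
    Set.ncard
      {h : Matrix (Fin 2) (Fin 2) ℂ | h.det ≠ 0 ∧ actM h ![0, 1, 0, 0] = ![0, 1, 0, 0] ∧
        dualActM h ![0, 0, 0, -1] = ![0, 0, 0, -1]} = 2 := by
  have hne : (!![1, 0; 0, 1] : Matrix (Fin 2) (Fin 2) ℂ) ≠ !![-1, 0; 0, 1] := by
    intro h
    have := congrFun₂ h 0 0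
    norm_num at this
  refine ⟨stabilizer_e1_dual_neg_e3_eq, ?_⟩
  rw [stabilizer_e1_dual_neg_e3_eq, Set.ncard_pair hne]

end
end

section
/- The simultaneous stabilizer {h ∈ GL₂(ℂ) : h·(1,0,0,0) = (1,0,0,0) and h·*(0,0,1,0) = (0,0,1,0)} is exactly the two-element subgroup {[[1,0],[0,1]], [[1,0],[0,−1]]}; in particular the equivariant microlocal fundamental group A^mic of the orbit of nonzero perfect-cube cubics has order 2. -/
noncomputable section

open Matrix

/-! Writing `h = [[a,b],[c,d]]`, the vector `h·e₀` is `(ad−bc)⁻¹` times the first column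
`(d³, −bd², −b²d, −b³)` of `M(h)`, so `h·e₀ = e₀` forces `b = 0` and `d² = a`. Then
`h·*e₂ = (ad)⁻²·(0, 0, ad², −3cd²)`, so `h·*e₂ = e₂` forces `c = 0` and `a = 1`, leaving `d = ±1`. -/

lemma act_apply_e0 (a b c d : ℂ) :
    act a b c d ![1, 0, 0, 0] =
      (a * d - b * c)⁻¹ • ![d ^ 3, -b * d ^ 2, -b ^ 2 * d, -b ^ 3] := by
  ext i; fin_cases i <;> simp [act, Mmat]

lemma dualAct_apply_e2 (a b c d : ℂ) :
    dualAct a b c d ![0, 0, 1, 0] = ((a * d - b * c) ^ 2)⁻¹ •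
      ![-3 * a * b ^ 2, -(2 * a * b * d + b ^ 2 * c), a * d ^ 2 + 2 * b * c * d,
        -3 * c * d ^ 2] := by
  ext i; fin_cases i <;> simp [dualAct, Mdual]

lemma act_e0_eq_self_iff {a b c d : ℂ} (hdet : a * d - b * c ≠ 0) :
    act a b c d ![1, 0, 0, 0] = ![1, 0, 0, 0] ↔ b = 0 ∧ d ^ 2 = a := by
  rw [act_apply_e0]
  simp only [smul_cons, smul_empty, smul_eq_mul, vecCons_inj, mul_eq_zero, inv_eq_zero, hdet,
    false_or]
  constructor
  · rintro ⟨h0, -, -, h3⟩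
    obtain rfl : b = 0 := by simpa using h3
    have hd : d ≠ 0 := by rintro rfl; simp at hdet
    refine ⟨rfl, ?_⟩
    field_simp at h0
    exact mul_left_cancel₀ hd (by linear_combination h0)
  · rintro ⟨rfl, rfl⟩
    have hd : d ≠ 0 := by rintro rfl; simp at hdet
    exact ⟨by simp; field_simp, by simp, by simp, by simp⟩

lemma dualAct_e2_eq_self_iff {a c d : ℂ} (hdet : a * d ≠ 0) :
    dualAct a 0 c d ![0, 0, 1, 0] = ![0, 0, 1, 0] ↔ c = 0 ∧ a = 1 := by
  rw [dualAct_apply_e2]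
  simp only [smul_cons, smul_empty, smul_eq_mul, vecCons_inj]
  obtain ⟨ha, hd⟩ := mul_ne_zero_iff.mp hdet
  constructor
  · rintro ⟨-, -, h2, h3⟩
    refine ⟨by simpa [ha, hd] using h3, ?_⟩
    simp only [mul_zero, zero_mul, sub_zero, add_zero] at h2
    field_simp at h2
    exact h2.symm
  · rintro ⟨rfl, rfl⟩
    exact ⟨by simp, by simp, by simp; field_simp, by simp⟩

lemma stabilizer_iff {a b c d : ℂ} :
    (a * d - b * c ≠ 0 ∧ act a b c d ![1, 0, 0, 0] = ![1, 0, 0, 0] ∧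
      dualAct a b c d ![0, 0, 1, 0] = ![0, 0, 1, 0]) ↔
      a = 1 ∧ b = 0 ∧ c = 0 ∧ (d = 1 ∨ d = -1) := by
  constructor
  · rintro ⟨hdet, hact, hdual⟩
    obtain ⟨rfl, rfl⟩ := (act_e0_eq_self_iff hdet).1 hact
    have hdet' : d ^ 2 * d ≠ 0 := by simpa using hdet
    obtain ⟨rfl, hd⟩ := (dualAct_e2_eq_self_iff hdet').1 hdual
    exact ⟨hd, rfl, rfl, sq_eq_one_iff.1 hd⟩
  · rintro ⟨rfl, rfl, rfl, hd⟩
    have hdet : 1 * d - 0 * 0 ≠ 0 := by rcases hd with rfl | rfl <;> norm_num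
    exact ⟨hdet, (act_e0_eq_self_iff hdet).2 ⟨rfl, sq_eq_one_iff.2 hd⟩,
      (dualAct_e2_eq_self_iff (by simpa using hdet)).2 ⟨rfl, rfl⟩⟩

theorem stabilizer_eq :
    {h : Matrix (Fin 2) (Fin 2) ℂ | h.det ≠ 0 ∧ actM h ![1, 0, 0, 0] = ![1, 0, 0, 0] ∧
        dualActM h ![0, 0, 1, 0] = ![0, 0, 1, 0]} =
      {(!![1, 0; 0, 1] : Matrix (Fin 2) (Fin 2) ℂ), !![1, 0; 0, -1]} := by
  ext h
  obtain ⟨a, b, c, d, rfl⟩ : ∃ a b c d : ℂ, h = !![a, b; c, d] := ⟨_, _, _, _, eta_fin_two h⟩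
  simp only [Set.mem_ofPred_eq, Set.mem_insert_iff, Set.mem_singleton_iff, det_fin_two_of, actM,
    dualActM, of_apply, cons_val', cons_val_zero, cons_val_one, empty_val', cons_val_fin_one,
    stabilizer_iff, EmbeddingLike.apply_eq_iff_eq, vecCons_inj, and_true]
  tauto

/-- the simultaneous stabilizer of `(1,0,0,0)` and the dual vector
`(0,0,1,0)` is exactly `{[[1,0],[0,1]], [[1,0],[0,−1]]}`; in particular it has order 2. -/
theorem stmt18 :
    {h : Matrix (Fin 2) (Fin 2) ℂ | h.det ≠ 0 ∧ actM h ![1, 0, 0, 0] = ![1, 0, 0, 0] ∧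
        dualActM h ![0, 0, 1, 0] = ![0, 0, 1, 0]} =
      {(!![1, 0; 0, 1] : Matrix (Fin 2) (Fin 2) ℂ), !![1, 0; 0, -1]} ∧
    Set.ncard
      {h : Matrix (Fin 2) (Fin 2) ℂ | h.det ≠ 0 ∧ actM h ![1, 0, 0, 0] = ![1, 0, 0, 0] ∧
        dualActM h ![0, 0, 1, 0] = ![0, 0, 1, 0]} = 2 := by
  refine ⟨stabilizer_eq, ?_⟩
  rw [stabilizer_eq, Set.ncard_pair]
  simp only [ne_eq, EmbeddingLike.apply_eq_iff_eq, vecCons_inj]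
  norm_num

end
end

section
/- The simultaneous stabilizer {h ∈ GL₂(ℂ) : h·(1,0,0,0) = (1,0,0,0) and h·*(0,0,0,−1) = (0,0,0,−1)} (the subgroup of GL₂(ℂ) fixing the cubic y³ together with the dual cubic x³) is exactly the set {[[d²,0],[c,d]] : c ∈ ℂ, d ∈ ℂ, d³ = 1}; moreover this subgroup has exactly three connected components (one for each cube root of unity d), so its component group is cyclic of order 3. -/
/-!
For `h = [[a,b],[c,d]]`, the first condition reads `(det h)⁻¹ (d³, -bd², -b²d, -b³) = (1,0,0,0)`
and the second `(det h)⁻² (-b³, -b²d, bd², -d³) = (0,0,0,-1)`. Hence `b = 0` and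
`d³ = det h = (det h)²`, so `det h = ad = 1`, `d³ = 1` and `a = d⁻¹ = d²`.
The stabilizer is therefore a union of three complex lines indexed by the cube root of unity
`d = h₁₁`; since `h ↦ h₁₁` is a continuous map onto a finite discrete set whose fibres are these
lines, its connected components are exactly the fibres.
-/

noncomputable section

open Matrix

theorem Continuous.bijective_connectedComponentsLift {X Y : Type*} [TopologicalSpace X]
    [TopologicalSpace Y] [TotallyDisconnectedSpace Y] {f : X → Y} (hf : Continuous f)
    (hsurj : Function.Surjective f) (hfib : ∀ y, IsPreconnected (f ⁻¹' {y})) :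
    Function.Bijective hf.connectedComponentsLift := by
  refine ⟨fun x x' hxx' => ?_, fun y => ?_⟩
  · obtain ⟨x, rfl⟩ := ConnectedComponents.surjective_coe x
    obtain ⟨x', rfl⟩ := ConnectedComponents.surjective_coe x'
    rw [hf.connectedComponentsLift_apply_coe, hf.connectedComponentsLift_apply_coe] at hxx'
    have hx' : x' ∈ connectedComponent x :=
      (hfib (f x)).subset_connectedComponent rfl hxx'.symm
    exact ConnectedComponents.coe_eq_coe.2 (connectedComponent_eq hx')
  · obtain ⟨x, rfl⟩ := hsurj y
    exact ⟨x, hf.connectedComponentsLift_apply_coe x⟩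

theorem actM_one_zero_zero_zero (h : Matrix (Fin 2) (Fin 2) ℂ) :
    actM h ![1, 0, 0, 0] =
      h.det⁻¹ • ![h 1 1 ^ 3, -h 0 1 * h 1 1 ^ 2, -h 0 1 ^ 2 * h 1 1, -h 0 1 ^ 3] := by
  ext i
  fin_cases i <;> simp [actM, act, Mmat, det_fin_two]

theorem dualActM_zero_zero_zero_neg_one (h : Matrix (Fin 2) (Fin 2) ℂ) :
    dualActM h ![0, 0, 0, -1] =
      (h.det ^ 2)⁻¹ • ![-h 0 1 ^ 3, -h 0 1 ^ 2 * h 1 1, h 0 1 * h 1 1 ^ 2, -h 1 1 ^ 3] := by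
  ext i
  fin_cases i <;> simp [dualActM, dualAct, Mdual, det_fin_two]

def cubicPairStabilizer : Set (Matrix (Fin 2) (Fin 2) ℂ) :=
  {h | h.det ≠ 0 ∧ actM h ![1, 0, 0, 0] = ![1, 0, 0, 0] ∧
    dualActM h ![0, 0, 0, -1] = ![0, 0, 0, -1]}

theorem mem_cubicPairStabilizer_iff {h : Matrix (Fin 2) (Fin 2) ℂ} :
    h ∈ cubicPairStabilizer ↔ ∃ c d : ℂ, d ^ 3 = 1 ∧ h = !![d ^ 2, 0; c, d] := by
  simp only [cubicPairStabilizer, Set.mem_ofPred_eq, actM_one_zero_zero_zero,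
    dualActM_zero_zero_zero_neg_one]
  constructor
  · rintro ⟨hdet, hact, hdual⟩
    have hb : h 0 1 = 0 := by
      simpa [hdet] using congrFun hact 3
    have hact0 : h 1 1 ^ 3 = h.det :=
      ((inv_mul_eq_one₀ hdet).1 (by simpa using congrFun hact 0)).symm
    have hdual3 : h 1 1 ^ 3 = h.det ^ 2 :=
      ((inv_mul_eq_one₀ (pow_ne_zero 2 hdet)).1 (by simpa using congrFun hdual 3)).symm
    have hdet1 : h.det = 1 := by
      have : h.det * (h.det - 1) = 0 := by linear_combination hact0 - hdual3
      simpa [hdet, sub_eq_zero] using this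
    have had : h 0 0 * h 1 1 = 1 := by
      rw [det_fin_two, hb] at hdet1
      simpa using hdet1
    refine ⟨h 1 0, h 1 1, hact0.trans hdet1, ?_⟩
    ext i j
    fin_cases i <;> fin_cases j
    all_goals simp [hb]
    linear_combination h 1 1 ^ 2 * had - h 0 0 * (hact0.trans hdet1)
  · rintro ⟨c, d, hd, rfl⟩
    have hdet : (!![d ^ 2, 0; c, d] : Matrix (Fin 2) (Fin 2) ℂ).det = 1 := by
      rw [det_fin_two_of]; linear_combination hd
    refine ⟨by simp [hdet], ?_, ?_⟩ <;> simp [hdet, hd]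

def lowerRightRoot (h : cubicPairStabilizer) : Polynomial.nthRootsFinset 3 (1 : ℂ) :=
  ⟨h.1 1 1, by
    obtain ⟨c, d, hd, hcd⟩ := mem_cubicPairStabilizer_iff.1 h.2
    simpa [hcd] using hd⟩

theorem continuous_lowerRightRoot : Continuous lowerRightRoot :=
  (continuous_subtype_val.matrix_elem 1 1).subtype_mk _

theorem isPreconnected_lowerRightRoot_fiber (d : Polynomial.nthRootsFinset 3 (1 : ℂ)) :
    IsPreconnected (lowerRightRoot ⁻¹' {d}) := by
  have hd : d.1 ^ 3 = 1 := (Polynomial.mem_nthRootsFinset three_pos 1).1 d.2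
  let γ : ℂ → cubicPairStabilizer := fun c =>
    ⟨!![d.1 ^ 2, 0; c, d.1], mem_cubicPairStabilizer_iff.2 ⟨c, d.1, hd, rfl⟩⟩
  have hγ : Continuous γ :=
    (by fun_prop : Continuous fun c : ℂ => !![d.1 ^ 2, 0; c, d.1]).subtype_mk _
  convert isPreconnected_range hγ
  ext ⟨h, hh⟩
  obtain ⟨c, d', -, rfl⟩ := mem_cubicPairStabilizer_iff.1 hh
  constructor
  · intro hfib
    obtain rfl : d' = d := congrArg Subtype.val hfib
    exact ⟨c, rfl⟩
  · rintro ⟨c', hc'⟩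
    rw [← hc']
    rfl

theorem surjective_lowerRightRoot : Function.Surjective lowerRightRoot := fun d =>
  have hd : d.1 ^ 3 = 1 := (Polynomial.mem_nthRootsFinset three_pos 1).1 d.2
  ⟨⟨!![d.1 ^ 2, 0; 0, d.1], mem_cubicPairStabilizer_iff.2 ⟨0, d.1, hd, rfl⟩⟩, rfl⟩

theorem nat_card_connectedComponents_cubicPairStabilizer :
    Nat.card (ConnectedComponents cubicPairStabilizer) = 3 := by
  rw [Nat.card_eq_of_bijective _ (continuous_lowerRightRoot.bijective_connectedComponentsLift
    surjective_lowerRightRoot isPreconnected_lowerRightRoot_fiber), Nat.card_eq_finsetCard,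
    (Complex.isPrimitiveRoot_exp 3 three_ne_zero).card_nthRootsFinset]

/-- the simultaneous stabilizer of the cubic `y³` (i.e. `(1,0,0,0)`) and the
dual cubic `x³` (i.e. `(0,0,0,−1)`) is exactly `{[[d²,0],[c,d]] : c ∈ ℂ, d³ = 1}`, and it
has exactly three connected components. -/
theorem stmt19 :
    {h : Matrix (Fin 2) (Fin 2) ℂ | h.det ≠ 0 ∧ actM h ![1, 0, 0, 0] = ![1, 0, 0, 0] ∧
        dualActM h ![0, 0, 0, -1] = ![0, 0, 0, -1]} =
      {m : Matrix (Fin 2) (Fin 2) ℂ | ∃ c d : ℂ, d ^ 3 = 1 ∧ m = !![d ^ 2, 0; c, d]} ∧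
    Nat.card (ConnectedComponents
      {h : Matrix (Fin 2) (Fin 2) ℂ // h.det ≠ 0 ∧ actM h ![1, 0, 0, 0] = ![1, 0, 0, 0] ∧
        dualActM h ![0, 0, 0, -1] = ![0, 0, 0, -1]}) = 3 :=
  ⟨Set.ext fun _ => mem_cubicPairStabilizer_iff,
    nat_card_connectedComponents_cubicPairStabilizer⟩

end
end
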